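/- arXiv:1607.07526 — 2 statements merged into one kernel-verified Lean document; each statement's English description precedes it below -/
import Mathlib

section
/- For every real t ≥ 1, (1 + 1/t) · t^(1/(2(t+1))) ≤ 2. -/
theorem elementary_bound_two (t : ℝ) (ht : 1 ≤ t) :
    (1 + 1/t) * t ^ (1 / (2 * (t + 1))) ≤ 2 := by
  have ht0 : (0:ℝ) < t := by linarith
  have ht1 : (0:ℝ) < t + 1 := by linarith
  -- weighted AM-GM: t^(1/(t+1)) ≤ 2t/(t+1)
  have h1 : t ^ ((1:ℝ)/(t+1)) ≤ 2*t/(t+1) := by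
    have hg := Real.geom_mean_le_arith_mean2_weighted
      (w₁ := 1/(t+1)) (w₂ := t/(t+1)) (p₁ := t) (p₂ := 1)
      (by positivity) (by positivity) ht0.le zero_le_one
      (by field_simp; ring)
    simpa [Real.one_rpow] using hg.trans_eq (by field_simp; ring)
  have h2 : t ^ (1 / (2 * (t + 1))) = (t ^ ((1:ℝ)/(t+1))) ^ ((1:ℝ)/2) := by
    rw [← Real.rpow_mul ht0.le]
    norm_num
  have h3 : (t ^ ((1:ℝ)/(t+1))) ^ ((1:ℝ)/2) ≤ (2*t/(t+1)) ^ ((1:ℝ)/2) :=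
    Real.rpow_le_rpow (Real.rpow_nonneg ht0.le _) h1 (by norm_num)
  have h4 : (2*t/(t+1)) ^ ((1:ℝ)/2) ≤ (3*t+1)/(2*(t+1)) := by
    rw [← Real.sqrt_eq_rpow]
    rw [show (3*t+1)/(2*(t+1)) = Real.sqrt (((3*t+1)/(2*(t+1)))^2) from
      (Real.sqrt_sq (by positivity)).symm]
    apply Real.sqrt_le_sqrt
    rw [div_pow, div_le_div_iff₀ (by positivity) (by positivity)]
    nlinarith [sq_nonneg (t-1), sq_nonneg (t+1)]
  have h5 : t ^ (1 / (2 * (t + 1))) ≤ (3*t+1)/(2*(t+1)) := by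
    rw [h2]; exact h3.trans h4
  have hpos : (0:ℝ) < 1 + 1/t := by positivity
  calc (1 + 1/t) * t ^ (1 / (2 * (t + 1)))
      ≤ (1 + 1/t) * ((3*t+1)/(2*(t+1))) := by
        exact mul_le_mul_of_nonneg_left h5 hpos.le
    _ ≤ 2 := by
        rw [show 1 + 1/t = (t+1)/t by field_simp, div_mul_div_comm,
          div_le_iff₀ (by positivity)]
        nlinarith
end

section
/- Let η(x), η(x') ∈ [0,1], τ ∈ [0,1/2], and η̂(x') = (1-2τ)η(x') + τ. Let y ~ Bernoulli(η(x)) and ŷ' ~ Bernoulli(η̂(x')) be independent. Then Pr[y ≠ ŷ'] = τ + (2 - 4τ)·η(x)(1 - η(x)) + (η(x') - η(x))(1 - 2η(x))(1 - 2τ). -/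
open MeasureTheory ProbabilityTheory

theorem disagreement_probability_noisy {Ω : Type*} [MeasurableSpace Ω]
    (μ : Measure Ω) [IsProbabilityMeasure μ]
    (y yhat : Ω → Bool) (ηx ηx' τ : ℝ)
    (hηx : ηx ∈ Set.Icc (0:ℝ) 1) (hηx' : ηx' ∈ Set.Icc (0:ℝ) 1)
    (hτ : τ ∈ Set.Icc (0:ℝ) (1/2))
    (hmy : Measurable y) (hmyhat : Measurable yhat)
    (hindep : IndepFun y yhat μ)
    (hy : μ {ω | y ω = true} = ENNReal.ofReal ηx)
    (hyhat : μ {ω | yhat ω = true} = ENNReal.ofReal ((1 - 2 * τ) * ηx' + τ)) :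
    μ {ω | y ω ≠ yhat ω} =
      ENNReal.ofReal (τ + (2 - 4 * τ) * ηx * (1 - ηx) +
        (ηx' - ηx) * (1 - 2 * ηx) * (1 - 2 * τ)) := by
  obtain ⟨hp0, hp1⟩ := hηx
  obtain ⟨hq0', hq1'⟩ := hηx'
  obtain ⟨ht0, ht1⟩ := hτ
  set q : ℝ := (1 - 2 * τ) * ηx' + τ with hqdef
  have h2t : 0 ≤ 1 - 2 * τ := by linarith
  have hq0 : 0 ≤ q := by positivity
  have hq1 : q ≤ 1 := by nlinarith
  -- measures of false sets
  have hyf : μ {ω | y ω = false} = ENNReal.ofReal (1 - ηx) := by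
    have hc : {ω | y ω = false} = {ω | y ω = true}ᶜ := by
      ext ω; simp
    rw [hc, measure_compl (show MeasurableSet {ω | y ω = true} from hmy (measurableSet_singleton true)) (measure_ne_top μ _), hy,
      measure_univ, ← ENNReal.ofReal_one, ← ENNReal.ofReal_sub _ hp0]
  have hyhatf : μ {ω | yhat ω = false} = ENNReal.ofReal (1 - q) := by
    have hc : {ω | yhat ω = false} = {ω | yhat ω = true}ᶜ := by
      ext ω; simp
    rw [hc, measure_compl (show MeasurableSet {ω | yhat ω = true} from hmyhat (measurableSet_singleton true)) (measure_ne_top μ _), hyhat,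
      measure_univ, ← ENNReal.ofReal_one, ← ENNReal.ofReal_sub _ hq0]
  have hsplit : {ω | y ω ≠ yhat ω} =
      ({ω | y ω = true} ∩ {ω | yhat ω = false}) ∪
      ({ω | y ω = false} ∩ {ω | yhat ω = true}) := by
    ext ω
    simp only [Set.mem_setOf_eq, Set.mem_union, Set.mem_inter_iff]
    cases h1 : y ω <;> cases h2 : yhat ω <;> simp
  have hdisj : Disjoint ({ω | y ω = true} ∩ {ω | yhat ω = false})
      ({ω | y ω = false} ∩ {ω | yhat ω = true}) := by
    apply Set.disjoint_left.mpr
    rintro ω ⟨h1, _⟩ ⟨h2, _⟩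
    simp only [Set.mem_setOf_eq] at h1 h2
    rw [h1] at h2; exact Bool.noConfusion h2
  have hm1 : MeasurableSet ({ω | y ω = true} ∩ {ω | yhat ω = false}) :=
    (hmy (measurableSet_singleton true)).inter (hmyhat (measurableSet_singleton false))
  have hind1 : μ ({ω | y ω = true} ∩ {ω | yhat ω = false}) =
      μ {ω | y ω = true} * μ {ω | yhat ω = false} := by
    have := hindep.measure_inter_preimage_eq_mul {true} {false}
      (measurableSet_singleton true) (measurableSet_singleton false)
    simpa [Set.preimage, Set.mem_singleton_iff] using this
  have hind2 : μ ({ω | y ω = false} ∩ {ω | yhat ω = true}) =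
      μ {ω | y ω = false} * μ {ω | yhat ω = true} := by
    have := hindep.measure_inter_preimage_eq_mul {false} {true}
      (measurableSet_singleton false) (measurableSet_singleton true)
    simpa [Set.preimage, Set.mem_singleton_iff] using this
  rw [hsplit, measure_union hdisj
    ((hmy (measurableSet_singleton false)).inter (hmyhat (measurableSet_singleton true))),
    hind1, hind2, hy, hyf, hyhat, hyhatf,
    ← ENNReal.ofReal_mul hp0, ← ENNReal.ofReal_mul (by linarith : (0:ℝ) ≤ 1 - ηx),
    ← ENNReal.ofReal_add (mul_nonneg hp0 (by linarith)) (mul_nonneg (by linarith) hq0)]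
  congr 1
  ring
end
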